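/- Let U be an n-qubit unitary, T ⊆ [n] with |T| = k, τ > 0, and S ⊇ {i ∈ T : Inf_i^{≤k}[U] ≥ τ²/k}. Let V be any junta unitary on T, and define V' = Tr_{S̄}(V)/2^{|S̄|} ⊗ I_{S̄}. Then (1/2ⁿ)·| |Tr(U†V)| − |Tr(U†V')| | ≤ τ. -/

import Mathlib

open scoped Matrix

open Finset

/-- The four single-qubit Pauli matrices `I, X, Y, Z`. -/
noncomputable def pauli (x : Fin 4) : Matrix (Fin 2) (Fin 2) ℂ :=
  if x = 0 then 1
  else if x = 1 then !![0, 1; 1, 0]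
  else if x = 2 then !![0, -Complex.I; Complex.I, 0]
  else !![1, 0; 0, -1]

/-- The `n`-qubit Pauli string `σ_x = σ_{x₁} ⊗ ⋯ ⊗ σ_{xₙ}`. -/
noncomputable def pauliString {n : ℕ} (x : Fin n → Fin 4) :
    Matrix (Fin n → Fin 2) (Fin n → Fin 2) ℂ :=
  Matrix.of fun a b => ∏ i, pauli (x i) (a i) (b i)

/-- The Pauli (Fourier) coefficient `Û(x) = 2⁻ⁿ Tr(σ_x† U)`. -/
noncomputable def pauliCoeff {n : ℕ} (U : Matrix (Fin n → Fin 2) (Fin n → Fin 2) ℂ)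
    (x : Fin n → Fin 4) : ℂ :=
  (1 / 2 ^ n) * Matrix.trace ((pauliString x)ᴴ * U)

/-- The support of a Pauli string. -/
def psupp {n : ℕ} (x : Fin n → Fin 4) : Finset (Fin n) :=
  Finset.univ.filter fun i => x i ≠ 0

/-- Influence of a set of qubits: `Inf_A[U] = ∑_{supp(x) ∩ A ≠ ∅} |Û(x)|²`. -/
noncomputable def infSet {n : ℕ} (U : Matrix (Fin n → Fin 2) (Fin n → Fin 2) ℂ)
    (A : Finset (Fin n)) : ℝ :=
  ∑ x ∈ Finset.univ.filter (fun x : Fin n → Fin 4 => (psupp x ∩ A).Nonempty),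
    ‖pauliCoeff U x‖ ^ 2

/-- Degree-`k` influence of qubit `i`:
`Inf_i^{≤k}[U] = ∑_{|supp(x)| ≤ k, x_i ≠ 0} |Û(x)|²`. -/
noncomputable def infLe {n : ℕ} (U : Matrix (Fin n → Fin 2) (Fin n → Fin 2) ℂ)
    (k : ℕ) (i : Fin n) : ℝ :=
  ∑ x ∈ Finset.univ.filter (fun x : Fin n → Fin 4 => (psupp x).card ≤ k ∧ x i ≠ 0),
    ‖pauliCoeff U x‖ ^ 2

/-- A matrix is a junta on the qubit set T if all its Pauli coefficients
outside T vanish, i.e. it acts nontrivially only on T. -/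
def IsJuntaOn {n : ℕ} (V : Matrix (Fin n → Fin 2) (Fin n → Fin 2) ℂ)
    (T : Finset (Fin n)) : Prop :=
  ∀ x : Fin n → Fin 4, ¬ psupp x ⊆ T → pauliCoeff V x = 0

/-- The matrix Tr_{S complement}(V)/2^{n-|S|} tensored with the identity
outside S, written as a matrix on the full n-qubit space. -/
noncomputable def avgOut {n : ℕ} (S : Finset (Fin n))
    (V : Matrix (Fin n → Fin 2) (Fin n → Fin 2) ℂ) :
    Matrix (Fin n → Fin 2) (Fin n → Fin 2) ℂ :=
  Matrix.of fun a b =>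
    if ∀ i, i ∉ S → a i = b i then
      (1 / 2 ^ n : ℂ) * ∑ c : Fin n → Fin 2,
        V (fun i => if i ∈ S then a i else c i) (fun i => if i ∈ S then b i else c i)
    else 0

/-! Expanding in the Pauli basis gives `Tr(U†W) = 2ⁿ ∑ₓ conj(Û(x)) Ŵ(x)`, and averaging out the
qubits outside `S` keeps exactly the Pauli coefficients supported in `S`. As `V` is a junta on `T`,
the two traces therefore differ by `2ⁿ` times the sum of `conj(Û(x)) V̂(x)` over the `x` supported
in `T` but not in `S`. Each such `x` has weight at most `k` and is nontrivial on some qubit of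
`T \ S`, whose low-degree influence is below `τ²/k`; so `∑ |Û(x)|² ≤ τ²` over these `x`, and
Cauchy–Schwarz with Parseval `∑ |V̂(x)|² = 1` bounds the sum by `τ`. -/

open ComplexConjugate

lemma trace_pauli (x : Fin 4) : (pauli x).trace = if x = 0 then 2 else 0 := by
  fin_cases x <;> simp [pauli, Matrix.trace, Fin.sum_univ_two]

lemma sum_pauli_mul_conj (a b a' b' : Fin 2) :
    ∑ x : Fin 4, pauli x a b * conj (pauli x a' b') = if a = a' ∧ b = b' then 2 else 0 := by
  fin_cases a <;> fin_cases b <;> fin_cases a' <;> fin_cases b' <;>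
    simp [pauli, Fin.sum_univ_four, Complex.ext_iff] <;> norm_num

section
variable {n : ℕ}

lemma sum_pauliString_mul_conj (a b a' b' : Fin n → Fin 2) :
    ∑ x : Fin n → Fin 4, pauliString x a b * conj (pauliString x a' b') =
      if a = a' ∧ b = b' then 2 ^ n else 0 := by
  simp only [pauliString, Matrix.of_apply, map_prod, ← Finset.prod_mul_distrib]
  rw [← Fintype.prod_sum fun i y => pauli y (a i) (b i) * conj (pauli y (a' i) (b' i))]
  simp only [sum_pauli_mul_conj, Finset.prod_ite_zero, Finset.prod_const, Finset.card_univ,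
    Fintype.card_fin, Finset.mem_univ, forall_const, funext_iff, forall_and]

theorem sum_pauliCoeff_smul_pauliString (U : Matrix (Fin n → Fin 2) (Fin n → Fin 2) ℂ) :
    ∑ x, pauliCoeff U x • pauliString x = U := by
  ext a b
  calc (∑ x, pauliCoeff U x • pauliString x) a b
      = (1 / 2 ^ n) * ∑ j : Fin n → Fin 2, ∑ i : Fin n → Fin 2, U i j *
          ∑ x : Fin n → Fin 4, pauliString x a b * conj (pauliString x i j) := by
        simp only [Matrix.sum_apply, Matrix.smul_apply, smul_eq_mul, pauliCoeff, Matrix.trace,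
          Matrix.diag, Matrix.mul_apply, Matrix.conjTranspose_apply, RCLike.star_def,
          Finset.mul_sum, Finset.sum_mul]
        rw [Finset.sum_comm]
        refine Finset.sum_congr rfl fun j _ => ?_
        rw [Finset.sum_comm]
        refine Finset.sum_congr rfl fun i _ => Finset.sum_congr rfl fun x _ => ?_
        ring
    _ = U a b := by
        simp only [sum_pauliString_mul_conj, ite_and, mul_ite, mul_zero, Finset.sum_ite_eq,
          Finset.mem_univ, if_true]
        field_simp

lemma trace_conjTranspose_mul_pauliString (U : Matrix (Fin n → Fin 2) (Fin n → Fin 2) ℂ)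
    (x : Fin n → Fin 4) : (Uᴴ * pauliString x).trace = 2 ^ n * conj (pauliCoeff U x) := by
  rw [pauliCoeff, map_mul, ← RCLike.star_def, ← Matrix.trace_conjTranspose,
    Matrix.conjTranspose_mul, Matrix.conjTranspose_conjTranspose]
  field_simp
  simp

lemma trace_conjTranspose_mul_sum_smul_pauliString
    (U : Matrix (Fin n → Fin 2) (Fin n → Fin 2) ℂ) (s : Finset (Fin n → Fin 4))
    (c : (Fin n → Fin 4) → ℂ) :
    (Uᴴ * ∑ x ∈ s, c x • pauliString x).trace = 2 ^ n * ∑ x ∈ s, conj (pauliCoeff U x) * c x := by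
  simp only [Matrix.mul_smul, Matrix.trace_sum, Matrix.trace_smul,
    trace_conjTranspose_mul_pauliString, smul_eq_mul, Finset.mul_sum]
  exact Finset.sum_congr rfl fun x _ => by ring

theorem trace_conjTranspose_mul_eq_sum_pauliCoeff
    (U W : Matrix (Fin n → Fin 2) (Fin n → Fin 2) ℂ) :
    (Uᴴ * W).trace = 2 ^ n * ∑ x, conj (pauliCoeff U x) * pauliCoeff W x := by
  conv_lhs => rw [← sum_pauliCoeff_smul_pauliString W]
  exact trace_conjTranspose_mul_sum_smul_pauliString U _ _

theorem sum_norm_sq_pauliCoeff_of_mem_unitaryGroup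
    {V : Matrix (Fin n → Fin 2) (Fin n → Fin 2) ℂ}
    (hV : V ∈ Matrix.unitaryGroup (Fin n → Fin 2) ℂ) : ∑ x, ‖pauliCoeff V x‖ ^ 2 = 1 := by
  have h := trace_conjTranspose_mul_eq_sum_pauliCoeff V V
  rw [← Matrix.star_eq_conjTranspose, Matrix.mem_unitaryGroup_iff'.mp hV, Matrix.trace_one,
    Fintype.card_fun, Fintype.card_fin, Fintype.card_fin] at h
  push_cast [Complex.conj_mul'] at h
  rw [eq_comm, mul_eq_left₀ (pow_ne_zero _ two_ne_zero)] at h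
  exact_mod_cast h

lemma avgOut_sum_smul {ι : Type*} (S : Finset (Fin n)) (s : Finset ι) (c : ι → ℂ)
    (M : ι → Matrix (Fin n → Fin 2) (Fin n → Fin 2) ℂ) :
    avgOut S (∑ x ∈ s, c x • M x) = ∑ x ∈ s, c x • avgOut S (M x) := by
  ext a b
  simp only [avgOut, Matrix.of_apply, Matrix.sum_apply, Matrix.smul_apply, smul_eq_mul]
  split_ifs
  · simp only [Finset.mul_sum]
    rw [Finset.sum_comm]
    exact Finset.sum_congr rfl fun c _ => Finset.sum_congr rfl fun x _ => by ring
  · simp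

lemma sum_prod_pauli_piecewise (S : Finset (Fin n)) (y : Fin n → Fin 4) (a b : Fin n → Fin 2) :
    ∑ c : Fin n → Fin 2,
        ∏ i, pauli (y i) (if i ∈ S then a i else c i) (if i ∈ S then b i else c i) =
      ∏ i, if i ∈ S then 2 * pauli (y i) (a i) (b i) else (pauli (y i)).trace := by
  rw [← Fintype.prod_sum fun i t =>
    pauli (y i) (if i ∈ S then a i else t) (if i ∈ S then b i else t)]
  refine Finset.prod_congr rfl fun i _ => ?_
  split_ifs <;> simp [Matrix.trace, two_mul]

/-- Non-identity Paulis are traceless, so averaging over the qubits outside `S` annihilates every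
Pauli string that acts nontrivially there. -/
lemma avgOut_pauliString (S : Finset (Fin n)) (y : Fin n → Fin 4) :
    avgOut S (pauliString y) = if psupp y ⊆ S then pauliString y else 0 := by
  ext a b
  simp only [avgOut, pauliString, Matrix.of_apply, sum_prod_pauli_piecewise]
  split_ifs with hab hy hy
  · have hy0 : ∀ i ∉ S, y i = 0 := fun i hi => by
      by_contra h
      exact hi (hy (by simp [psupp, h]))
    rw [show (2 : ℂ) ^ n = ∏ _i : Fin n, 2 by simp, one_div, ← Finset.prod_inv_distrib,
      ← Finset.prod_mul_distrib]
    refine Finset.prod_congr rfl fun i _ => ?_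
    by_cases hi : i ∈ S
    · simp [hi]
    · simp [hi, hy0 i hi, pauli, Matrix.trace, Matrix.one_apply, hab i hi]
  · obtain ⟨i, hi, hiS⟩ := Finset.not_subset.mp hy
    rw [Finset.prod_eq_zero (Finset.mem_univ i) (by simpa [hiS, trace_pauli, psupp] using hi),
      mul_zero, Matrix.zero_apply]
  · obtain ⟨i, hiS, hne⟩ : ∃ i ∉ S, a i ≠ b i := by simpa using hab
    have hyi : y i = 0 := by
      by_contra h
      exact hiS (hy (by simp [psupp, h]))
    refine (Finset.prod_eq_zero (Finset.mem_univ i) ?_).symm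
    simp [hyi, pauli, hne]
  · rfl

theorem avgOut_eq_sum_pauliCoeff_smul (S : Finset (Fin n))
    (V : Matrix (Fin n → Fin 2) (Fin n → Fin 2) ℂ) :
    avgOut S V = ∑ x with psupp x ⊆ S, pauliCoeff V x • pauliString x := by
  conv_lhs => rw [← sum_pauliCoeff_smul_pauliString V]
  simp [avgOut_sum_smul, avgOut_pauliString, Finset.sum_filter, smul_ite]

theorem trace_conjTranspose_mul_sub_avgOut {U V : Matrix (Fin n → Fin 2) (Fin n → Fin 2) ℂ}
    {T : Finset (Fin n)} (hV : IsJuntaOn V T) (S : Finset (Fin n)) :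
    (Uᴴ * V).trace - (Uᴴ * avgOut S V).trace =
      2 ^ n * ∑ x with psupp x ⊆ T ∧ ¬ psupp x ⊆ S, conj (pauliCoeff U x) * pauliCoeff V x := by
  rw [trace_conjTranspose_mul_eq_sum_pauliCoeff, avgOut_eq_sum_pauliCoeff_smul,
    trace_conjTranspose_mul_sum_smul_pauliString, ← mul_sub, Finset.sum_filter,
    Finset.sum_filter, ← Finset.sum_sub_distrib]
  congr 1
  refine Finset.sum_congr rfl fun x _ => ?_
  by_cases hS : psupp x ⊆ S
  · simp [hS]
  by_cases hT : psupp x ⊆ T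
  · simp [hS, hT]
  · simp [hS, hT, hV x hT]

theorem sum_norm_sq_pauliCoeff_le_sum_infLe (U : Matrix (Fin n → Fin 2) (Fin n → Fin 2) ℂ)
    {k : ℕ} {T : Finset (Fin n)} (hT : T.card ≤ k) (S : Finset (Fin n)) :
    ∑ x with psupp x ⊆ T ∧ ¬ psupp x ⊆ S, ‖pauliCoeff U x‖ ^ 2 ≤ ∑ i ∈ T \ S, infLe U k i := by
  set B := ({x | psupp x ⊆ T ∧ ¬ psupp x ⊆ S} : Finset (Fin n → Fin 4))
  let f x := ‖pauliCoeff U x‖ ^ 2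
  have hcover : ∀ x ∈ B, f x ≤ ∑ i ∈ T \ S, if x i ≠ 0 then f x else 0 := by
    intro x hx
    obtain ⟨-, hxT, hxS⟩ := Finset.mem_filter.mp hx
    obtain ⟨i, hix, hiS⟩ := Finset.not_subset.mp hxS
    have hi : i ∈ T \ S := Finset.mem_sdiff.mpr ⟨hxT hix, hiS⟩
    have hxi : x i ≠ 0 := (Finset.mem_filter.mp hix).2
    calc f x = if x i ≠ 0 then f x else 0 := (if_pos hxi).symm
      _ ≤ _ := Finset.single_le_sum (f := fun i => if x i ≠ 0 then f x else 0)
          (fun _ _ => by positivity) hi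
  calc ∑ x ∈ B, f x ≤ ∑ x ∈ B, ∑ i ∈ T \ S, if x i ≠ 0 then f x else 0 :=
        Finset.sum_le_sum hcover
    _ = ∑ i ∈ T \ S, ∑ x ∈ B with x i ≠ 0, f x := by
        rw [Finset.sum_comm]
        simp only [Finset.sum_filter]
    _ ≤ ∑ i ∈ T \ S, infLe U k i := by
        refine Finset.sum_le_sum fun i _ => ?_
        refine Finset.sum_le_sum_of_subset_of_nonneg (fun x hx => ?_) fun _ _ _ => by positivity
        obtain ⟨hxB, hxi⟩ := Finset.mem_filter.mp hx
        have hxT := (Finset.mem_filter.mp hxB).2.1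
        exact Finset.mem_filter.mpr ⟨Finset.mem_univ x, (Finset.card_le_card hxT).trans hT, hxi⟩

end

lemma sum_sdiff_le_of_forall_ge_imp_mem {ι : Type*} [DecidableEq ι] {f : ι → ℝ} {c : ℝ}
    (hc : 0 ≤ c) {T S : Finset ι} (hS : ∀ i ∈ T, c / T.card ≤ f i → i ∈ S) :
    ∑ i ∈ T \ S, f i ≤ c := by
  have hlt : ∀ i ∈ T \ S, f i ≤ c / T.card := fun i hi => by
    obtain ⟨hiT, hiS⟩ := Finset.mem_sdiff.mp hi
    exact (lt_of_not_ge fun h => hiS (hS i hiT h)).le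
  calc ∑ i ∈ T \ S, f i ≤ (T \ S).card * (c / T.card) := by
        simpa using Finset.sum_le_card_nsmul _ _ _ hlt
    _ ≤ T.card * (c / T.card) := by
        gcongr
        exact Finset.sdiff_subset
    _ ≤ c := by
        rcases (Nat.cast_nonneg (α := ℝ) T.card).eq_or_lt with h | h
        · simp [← h, hc]
        · rw [mul_div_cancel₀ _ h.ne']

lemma norm_sum_conj_mul_le {ι : Type*} (s : Finset ι) (f g : ι → ℂ) :
    ‖∑ i ∈ s, conj (f i) * g i‖ ≤ √(∑ i ∈ s, ‖f i‖ ^ 2) * √(∑ i ∈ s, ‖g i‖ ^ 2) :=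
  calc ‖∑ i ∈ s, conj (f i) * g i‖ ≤ ∑ i ∈ s, ‖f i‖ * ‖g i‖ :=
        (norm_sum_le _ _).trans_eq (by simp)
    _ ≤ _ := Real.sum_mul_le_sqrt_mul_sqrt s _ _

theorem stmt16_general {n : ℕ} (k : ℕ) (τ : ℝ) (hτ : 0 < τ)
    (T S : Finset (Fin n)) (hT : T.card = k)
    (U V : Matrix (Fin n → Fin 2) (Fin n → Fin 2) ℂ)
    (hV : V ∈ Matrix.unitaryGroup (Fin n → Fin 2) ℂ)
    (hVjunta : IsJuntaOn V T)
    (hS : ∀ i ∈ T, τ ^ 2 / k ≤ infLe U k i → i ∈ S) :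
    (1 / (2 ^ n : ℝ)) *
        |‖Matrix.trace (Uᴴ * V)‖
          - ‖Matrix.trace (Uᴴ * avgOut S V)‖| ≤ τ := by
  set B := ({x | psupp x ⊆ T ∧ ¬ psupp x ⊆ S} : Finset (Fin n → Fin 4))
  have hUB : ∑ x ∈ B, ‖pauliCoeff U x‖ ^ 2 ≤ τ ^ 2 :=
    (sum_norm_sq_pauliCoeff_le_sum_infLe U hT.le S).trans
      (sum_sdiff_le_of_forall_ge_imp_mem (sq_nonneg τ) (hT ▸ hS))
  have hVB : ∑ x ∈ B, ‖pauliCoeff V x‖ ^ 2 ≤ 1 :=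
    sum_norm_sq_pauliCoeff_of_mem_unitaryGroup hV ▸
      Finset.sum_le_sum_of_subset_of_nonneg (Finset.subset_univ B) fun _ _ _ => by positivity
  calc (1 / (2 ^ n : ℝ)) * |‖(Uᴴ * V).trace‖ - ‖(Uᴴ * avgOut S V).trace‖|
      ≤ (1 / 2 ^ n) * ‖(Uᴴ * V).trace - (Uᴴ * avgOut S V).trace‖ := by
        gcongr
        exact abs_norm_sub_norm_le _ _
    _ = ‖∑ x ∈ B, conj (pauliCoeff U x) * pauliCoeff V x‖ := by
        rw [trace_conjTranspose_mul_sub_avgOut hVjunta, norm_mul, norm_pow, Complex.norm_two]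
        field_simp
        rfl
    _ ≤ √(τ ^ 2) * √1 := (norm_sum_conj_mul_le B _ _).trans (by gcongr)
    _ = τ := by rw [Real.sqrt_sq hτ.le, Real.sqrt_one, mul_one]

theorem stmt16 {n : ℕ} (k : ℕ) (τ : ℝ) (hτ : 0 < τ)
    (T S : Finset (Fin n)) (hT : T.card = k)
    (U V : Matrix (Fin n → Fin 2) (Fin n → Fin 2) ℂ)
    (hU : U ∈ Matrix.unitaryGroup (Fin n → Fin 2) ℂ)
    (hV : V ∈ Matrix.unitaryGroup (Fin n → Fin 2) ℂ)
    (hVjunta : IsJuntaOn V T)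
    (hS : ∀ i ∈ T, τ ^ 2 / k ≤ infLe U k i → i ∈ S) :
    (1 / (2 ^ n : ℝ)) *
        |‖Matrix.trace (Uᴴ * V)‖
          - ‖Matrix.trace (Uᴴ * avgOut S V)‖| ≤ τ :=
  stmt16_general k τ hτ T S hT U V hV hVjunta hS
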